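/- Every feasible solution of the counterexample instance in which some robot r sprays the full capacity on edge {2,3}, i.e. y_r({2,3}) = 8 (and hence y_r(e) = 0 for every other edge e), has cost at least 9. -/

import Mathlib

/-!
The robot spraying `8` on `{1,2}` has no capacity left, so every edge still has unmet demand
and is traversed by some other robot. A closed walk traverses an even number of edges at each
vertex; vertex `2` has odd degree `3`, so the other robots traverse at least four edges at `2`
and two away from it, for a cost of at least `6`. The full robot's own closed walk starts at the
depot `0` and uses the edge `{1,2}` away from it, so it has an even, positive number of edges at
`0` plus one more: length at least `3`.
-/

/-- The counterexample graph of the paper's Theorem 2: the 4-cycle `0-1-2-3-0` together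
with the chord `{0,2}` (vertices `0,1,2,3` stand for the paper's vertices `1,2,3,4`;
the depot is vertex `0`; the missing edge `{1,3}` is the paper's `{2,4}`). -/
def CG : SimpleGraph (Fin 4) where
  Adj a b := a ≠ b ∧ s(a, b) ≠ s(1, 3)
  symm := by
    refine ⟨?_⟩
    intro a b h
    exact ⟨h.1.symm, by rw [Sym2.eq_swap]; exact h.2⟩
  loopless := by
    refine ⟨?_⟩
    intro a h
    exact h.1 rfl

instance : DecidableRel CG.Adj := fun a b =>
  decidable_of_iff (a ≠ b ∧ s(a, b) ≠ s(1, 3)) Iff.rfl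

/-- Demands: `12` on the edge `{1,2}` (the paper's `{2,3}`) and `1` on every other edge. -/
noncomputable def Dem : Sym2 (Fin 4) → ℝ := fun e => if e = s(1, 2) then 12 else 1

/-- A feasible solution: a finite family of closed walks at the depot `0` together with
nonnegative sprays `y r e`, where `y r e > 0` only if robot `r`'s walk traverses `e`,
each robot sprays at most the capacity `8` in total, and the total spray on each edge
equals its demand. -/
def Feasible {R : ℕ} (walk : Fin R → CG.Walk 0 0)
    (y : Fin R → Sym2 (Fin 4) → ℝ) : Prop :=
  (∀ r e, 0 ≤ y r e) ∧
  (∀ r e, 0 < y r e → e ∈ (walk r).edges) ∧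
  (∀ r, ∑ e ∈ CG.edgeFinset, y r e ≤ 8) ∧
  (∀ e ∈ CG.edgeSet, ∑ r, y r e = Dem e)

namespace SimpleGraph.Walk

variable {V : Type*} [DecidableEq V] {G : SimpleGraph V}

theorem even_countP_edges_iff {u v : V} (p : G.Walk u v) (x : V) :
    Even (p.edges.countP fun e => x ∈ e) ↔ u ≠ v → x ≠ u ∧ x ≠ v := by
  induction p with
  | nil => simp
  | cons huv p ih =>
    simp only [List.countP_cons, Ne, edges_cons, Sym2.mem_iff]
    split_ifs with h
    · rw [decide_eq_true_eq] at h
      obtain (rfl | rfl) := h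
      · rw [Nat.even_add_one, ih]
        simp only [huv.ne, imp_false, Ne, not_false_iff, true_and, not_forall,
          Classical.not_not, exists_prop, not_true, false_and, and_iff_right_iff_imp]
        rintro rfl rfl
        exact G.loopless.irrefl _ huv
      · have := huv.ne; grind
    · grind

theorem even_countP_edges_of_closed {u : V} (p : G.Walk u u) (x : V) :
    Even (p.edges.countP fun e => x ∈ e) :=
  (p.even_countP_edges_iff x).2 fun h => (h rfl).elim

theorem three_le_length_of_mem_edges {u : V} (p : G.Walk u u) {e : Sym2 V}
    (he : e ∈ p.edges) (hu : u ∉ e) : 3 ≤ p.length := by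
  have hnil : ¬p.Nil := fun h => by simp [h.eq_nil] at he
  have hat : 0 < p.edges.countP fun e => u ∈ e :=
    List.countP_pos_iff.2 ⟨_, p.mk_start_snd_mem_edges hnil, by simp⟩
  have hoff : 0 < p.edges.countP fun e => u ∉ e := List.countP_pos_iff.2 ⟨e, he, by simpa⟩
  have heven := p.even_countP_edges_of_closed u
  rw [← p.length_edges, List.length_eq_countP_add_countP (fun e => u ∈ e)]
  simp only [decide_eq_true_eq]
  obtain ⟨k, hk⟩ := heven
  omega

end SimpleGraph.Walk

theorem Multiset.card_le_countP_of_forall_mem {α : Type*} [DecidableEq α] {p : α → Prop}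
    [DecidablePred p] {s : Multiset α} {t : Finset α} (h : ∀ a ∈ t, a ∈ s ∧ p a) :
    t.card ≤ s.countP p := by
  rw [Multiset.countP_eq_card_filter]
  refine (Finset.card_le_card fun a ha => ?_).trans (Multiset.toFinset_card_le _)
  exact Multiset.mem_toFinset.2 (Multiset.mem_filter.2 (h a ha))

theorem exists_ne_pos_of_lt_sum {ι M : Type*} [Fintype ι] [DecidableEq ι] [AddCommMonoid M]
    [LinearOrder M] [IsOrderedCancelAddMonoid M] {f : ι → M} {r : ι} (h : f r < ∑ i, f i) :
    ∃ i ≠ r, 0 < f i := by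
  rw [← Finset.add_sum_erase _ _ (Finset.mem_univ r), lt_add_iff_pos_right,
    ← Finset.sum_const_zero] at h
  obtain ⟨i, hi, hpos⟩ := Finset.exists_lt_of_sum_lt h
  exact ⟨i, Finset.ne_of_mem_erase hi, hpos⟩

theorem CG.six_le_sum_length_of_forall_mem_edges {ι : Type*} (s : Finset ι)
    (walk : ι → CG.Walk 0 0) (hcover : ∀ e ∈ CG.edgeSet, ∃ i ∈ s, e ∈ (walk i).edges) :
    6 ≤ ∑ i ∈ s, (walk i).length := by
  set M : Multiset (Sym2 (Fin 4)) := ∑ i ∈ s, ((walk i).edges : Multiset (Sym2 (Fin 4)))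
  have hcard : M.card = ∑ i ∈ s, (walk i).length := by simp [M]
  have hmem : ∀ e ∈ CG.edgeSet, e ∈ M := fun e he => by
    simpa [M, Multiset.mem_sum] using hcover e he
  have heven : Even (M.countP (2 ∈ ·)) := by
    rw [show M.countP (2 ∈ ·) = Multiset.countPAddMonoidHom (2 ∈ ·) M from rfl, map_sum]
    exact Finset.even_sum _ fun i _ => by simpa using (walk i).even_countP_edges_of_closed 2
  have hat : 3 ≤ M.countP (2 ∈ ·) := by
    refine le_of_eq_of_le (by decide)
      (Multiset.card_le_countP_of_forall_mem (t := {s(0, 2), s(1, 2), s(2, 3)}) ?_)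
    simp only [Finset.mem_insert, Finset.mem_singleton]
    rintro e (rfl | rfl | rfl) <;> exact ⟨hmem _ (by decide), by decide⟩
  have hoff : 2 ≤ M.countP (2 ∉ ·) := by
    refine le_of_eq_of_le (by decide)
      (Multiset.card_le_countP_of_forall_mem (t := {s(0, 1), s(0, 3)}) ?_)
    simp only [Finset.mem_insert, Finset.mem_singleton]
    rintro e (rfl | rfl) <;> exact ⟨hmem _ (by decide), by decide⟩
  rw [← hcard, Multiset.card_eq_countP_add_countP (2 ∈ ·)]
  obtain ⟨k, hk⟩ := heven
  omega

namespace Feasible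

variable {R : ℕ} {walk : Fin R → CG.Walk 0 0} {y : Fin R → Sym2 (Fin 4) → ℝ} {r : Fin R}

theorem spray_lt_Dem_of_full (hfeas : Feasible walk y) (hr : y r s(1, 2) = 8)
    {e : Sym2 (Fin 4)} (he : e ∈ CG.edgeSet) : y r e < Dem e := by
  by_cases he12 : e = s(1, 2)
  · subst he12
    rw [hr]
    norm_num [Dem]
  · have hpair : y r e + y r s(1, 2) ≤ ∑ e ∈ CG.edgeFinset, y r e := by
      rw [← Finset.sum_pair he12]
      refine Finset.sum_le_sum_of_subset_of_nonneg ?_ fun e _ _ => hfeas.1 r e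
      simp only [Finset.insert_subset_iff, Finset.singleton_subset_iff,
        SimpleGraph.mem_edgeFinset]
      exact ⟨he, by decide⟩
    have hcap := hfeas.2.2.1 r
    rw [Dem, if_neg he12]
    linarith

theorem exists_ne_mem_edges_of_full (hfeas : Feasible walk y) (hr : y r s(1, 2) = 8)
    {e : Sym2 (Fin 4)} (he : e ∈ CG.edgeSet) : ∃ s ≠ r, e ∈ (walk s).edges := by
  have hlt : y r e < ∑ s, y s e := (hfeas.2.2.2 e he).symm ▸ hfeas.spray_lt_Dem_of_full hr he
  obtain ⟨s, hs, hpos⟩ := exists_ne_pos_of_lt_sum (f := fun s => y s e) hlt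
  exact ⟨s, hs, hfeas.2.1 s e hpos⟩

end Feasible

/-- Every feasible solution of the counterexample instance in which some robot sprays
the full capacity `8` on the edge `{2,3}` of the paper (here `{1,2}`) has cost at
least `9`. -/
theorem counterexample_full_capacity_cost_lower_bound_nine
    (R : ℕ) (walk : Fin R → CG.Walk 0 0) (y : Fin R → Sym2 (Fin 4) → ℝ)
    (hfeas : Feasible walk y)
    (hfull : ∃ r, y r s(1, 2) = 8) :
    9 ≤ ∑ r, (walk r).length := by
  obtain ⟨r, hr⟩ := hfull
  have hfirst : 3 ≤ (walk r).length :=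
    (walk r).three_le_length_of_mem_edges (hfeas.2.1 r _ (by rw [hr]; norm_num)) (by decide)
  have hothers : 6 ≤ ∑ s ∈ Finset.univ.erase r, (walk s).length := by
    refine CG.six_le_sum_length_of_forall_mem_edges _ walk fun e he => ?_
    obtain ⟨s, hs, hes⟩ := hfeas.exists_ne_mem_edges_of_full hr he
    exact ⟨s, Finset.mem_erase.2 ⟨hs, Finset.mem_univ s⟩, hes⟩
  rw [← Finset.add_sum_erase _ _ (Finset.mem_univ r)]
  omega
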